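/- Let D be an integral domain with quotient field K, ⋆ a semistar operation on D, T an overring of D, and ℓ = ℓ_{⋆,T}. Then ℓ is a semistar operation of finite type on T (ℓ = ℓ_f) and ℓ̃ = ℓ, where ℓ̃ is the spectral semistar operation on T associated to the set of quasi-ℓ_f-maximal ideals of T. -/
import Mathlib


open Pointwise

/-! Basic framework for semistar operations on an integral domain `D`
with quotient field `K`. Submodules of `K` play the role of the
`D`-submodules of the quotient field. -/

section Generic

variable (R : Type*) (K : Type*) [CommRing R] [Field K] [Algebra R K]

/-- A semistar operation on `R` (with ambient field `K`): a map on the nonzero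
`R`-submodules of `K` satisfying (⋆₁), (⋆₂), (⋆₃). The map is total on
`Submodule R K`, but the axioms are only imposed on nonzero submodules. -/
structure SemistarOp where
  toFun : Submodule R K → Submodule R K
  smul' : ∀ x : K, x ≠ 0 → ∀ E : Submodule R K, E ≠ ⊥ → toFun (x • E) = x • toFun E
  mono' : ∀ E F : Submodule R K, E ≠ ⊥ → F ≠ ⊥ → E ≤ F → toFun E ≤ toFun F
  le_star' : ∀ E : Submodule R K, E ≠ ⊥ → E ≤ toFun E
  idem' : ∀ E : Submodule R K, E ≠ ⊥ → toFun (toFun E) = toFun E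

variable {R K}

/-- The `R`-submodule of `K` generated by (the image of) an ideal of `R`. -/
def idealSub (I : Ideal R) : Submodule R K := Submodule.map (Algebra.linearMap R K) I

/-- The finite-type operation `⋆_f` associated to (the function underlying) a semistar
operation: `E^{⋆_f} = ∪ { F^⋆ : F nonzero finitely generated, F ⊆ E }`. -/
def starF (f : Submodule R K → Submodule R K) (E : Submodule R K) : Submodule R K :=
  sSup {G | ∃ F : Submodule R K, F.FG ∧ F ≠ ⊥ ∧ F ≤ E ∧ G = f F}

/-- `I` is a quasi-⋆-ideal: `I ≠ 0` and `I^⋆ ∩ R = I`. -/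
def QuasiIdeal (f : Submodule R K → Submodule R K) (I : Ideal R) : Prop :=
  I ≠ ⊥ ∧ Submodule.comap (Algebra.linearMap R K) (f (idealSub I)) = I

/-- `I` is a quasi-⋆-prime: a prime quasi-⋆-ideal. -/
def QuasiPrime (f : Submodule R K → Submodule R K) (I : Ideal R) : Prop :=
  QuasiIdeal f I ∧ I.IsPrime

/-- `I` is a quasi-⋆-maximal: maximal among proper quasi-⋆-ideals. -/
def QuasiMax (f : Submodule R K → Submodule R K) (I : Ideal R) : Prop :=
  QuasiIdeal f I ∧ I ≠ ⊤ ∧ ∀ J : Ideal R, QuasiIdeal f J → J ≠ ⊤ → I ≤ J → I = J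

/-- The localization `E·R_Q` of a submodule `E` of `K` at (the complement of) `Q`:
for prime `Q` this is `{x ∈ K : s·x ∈ E for some s ∉ Q}`. -/
def locSub (Q : Ideal R) (E : Submodule R K) : Submodule R K :=
  Submodule.span R {x : K | ∃ s : R, s ∉ Q ∧ algebraMap R K s * x ∈ E}

/-- The spectral semistar operation `⋆̃` associated to `⋆`:
`E^{⋆̃} = ∩ { E R_Q : Q quasi-⋆_f-maximal }` (equal to `K` if there are none). -/
def tildeOp (f : Submodule R K → Submodule R K) (E : Submodule R K) : Submodule R K :=
  ⨅ (Q : Ideal R) (_ : QuasiMax (starF f) Q), locSub Q E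

/-- The `v`-operation `E ↦ (R :_K (R :_K E))`. -/
def vOp (E : Submodule R K) : Submodule R K := 1 / (1 / E)

/-- The `t`-operation: the finite-type operation associated to `v`. -/
def tOp : Submodule R K → Submodule R K := starF (vOp (R := R) (K := K))

/-- `R` is a Prüfer ⋆-multiplication domain: every nonzero finitely generated ideal `F`
is ⋆_f-invertible, i.e. `(F·(R :_K F))^{⋆_f} = R^⋆`. -/
def PSMD (f : Submodule R K → Submodule R K) : Prop :=
  ∀ F : Ideal R, F ≠ ⊥ → F.FG →
    starF f (idealSub F * ((1 : Submodule R K) / idealSub F)) = f 1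

/-- The content ideal of a polynomial: the ideal generated by its coefficients. -/
def contentI (h : Polynomial R) : Ideal R := Ideal.span (Set.range h.coeff)

/-- The Nagata ring `Na(R,⋆) = R[X]_{N(⋆)}`, realized as the subset
`{g/h : g, h ∈ R[X], h ≠ 0, c(h)^⋆ = R^⋆}` of the field `K(X)` of rational functions. -/
def NaSet (f : Submodule R K → Submodule R K) : Set (RatFunc K) :=
  {x | ∃ g h : Polynomial R, h ≠ 0 ∧ f (idealSub (contentI h)) = f 1 ∧
    x * algebraMap (Polynomial K) (RatFunc K) (h.map (algebraMap R K)) =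
      algebraMap (Polynomial K) (RatFunc K) (g.map (algebraMap R K))}

/-- The Nagata ring as a subring of `K(X)` (the set `NaSet` is multiplicatively
saturated, so it coincides with the subring it generates). -/
noncomputable def NaSub (f : Submodule R K → Submodule R K) : Subring (RatFunc K) :=
  Subring.closure (NaSet f)

/-- A subset `S` of `K` is integrally closed (in `K`) if every element of `K` which is a root
of a monic polynomial with coefficients in `S` lies in `S`. -/
def IntClosedSet (S : Set K) : Prop :=
  ∀ x : K, (∃ p : Polynomial K, p.Monic ∧ (∀ n, p.coeff n ∈ S) ∧ p.eval x = 0) → x ∈ S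

/-- A subset `S` of `K` is seminormal if `x² ∈ S` and `x³ ∈ S` imply `x ∈ S`. -/
def SeminormalSet (S : Set K) : Prop := ∀ x : K, x ^ 2 ∈ S → x ^ 3 ∈ S → x ∈ S

/-- `T` is `(f,g)`-linked to `T` (case `D = T` of linkedness). -/
def LinkedSelf (f g : Submodule R K → Submodule R K) : Prop :=
  ∀ G : Ideal R, G ≠ ⊥ → G.FG → f (idealSub G) = f 1 → g (idealSub G) = g 1

end Generic

section Overring

variable {D : Type*} {K : Type*} [CommRing D] [Field K] [Algebra D K]

/-- The `T`-submodule `E·T` of `K` generated by a `D`-submodule `E` of `K`. -/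
def extT (T : Subalgebra D K) (E : Submodule D K) : Submodule ↥T K :=
  Submodule.span ↥T (E : Set K)

/-- `T` is `(⋆,⋆')`-linked to `D`: for every nonzero finitely generated integral ideal `F`
of `D`, `F^⋆ = D^⋆` implies `(FT)^{⋆'} = T^{⋆'}`. -/
def LinkedF (f : Submodule D K → Submodule D K) (T : Subalgebra D K)
    (g : Submodule ↥T K → Submodule ↥T K) : Prop :=
  ∀ F : Ideal D, F ≠ ⊥ → F.FG → f (idealSub F) = f 1 → g (extT T (idealSub F)) = g 1

/-- `T` is `t`-linked to `(D,⋆)`: `T` is `(⋆, t_T)`-linked to `D`. -/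
def TLinked (f : Submodule D K → Submodule D K) (T : Subalgebra D K) : Prop :=
  LinkedF f T (tOp (R := ↥T) (K := K))

/-- The semistar operation `ℓ_{⋆,T}` on `T`:
`E^ℓ = ∩ { E T_{D∖P} : P quasi-⋆_f-prime of D }` (equal to `K` if there are none). -/
def ellOp (f : Submodule D K → Submodule D K) (T : Subalgebra D K)
    (E : Submodule ↥T K) : Submodule ↥T K :=
  ⨅ (P : Ideal D) (_ : QuasiPrime (starF f) P),
    Submodule.span ↥T {x : K | ∃ r : D, r ∉ P ∧ algebraMap D K r * x ∈ E}

/-- The localization `D_P` of `D` at a prime `P`, as a subalgebra of `K`. -/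
def Dloc (P : Ideal D) : Subalgebra D K :=
  Algebra.adjoin D {x : K | ∃ r : D, r ∉ P ∧ algebraMap D K r * x ∈ (⊥ : Subalgebra D K)}

/-- The localization `T_{D∖P}` of an overring `T` at the multiplicative set `D∖P`,
as a subalgebra of `K`. -/
def TlocD (T : Subalgebra D K) (P : Ideal D) : Subalgebra D K :=
  Algebra.adjoin D {x : K | ∃ r : D, r ∉ P ∧ algebraMap D K r * x ∈ T}

/-- The localization `T_Q` of an overring `T` at a prime `Q` of `T`,
as a subalgebra of `K`. -/
def TlocQ (T : Subalgebra D K) (Q : Ideal ↥T) : Subalgebra D K :=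
  Algebra.adjoin D {x : K | ∃ t : ↥T, t ∉ Q ∧ (t : K) * x ∈ T}

/-- `T` is `(⋆,⋆')`-flat over `D`: `T` is `(⋆,⋆')`-linked to `D` and `D_{Q∩D} = T_Q`
for every quasi-⋆'_f-prime `Q` of `T`. -/
def FlatF (f : Submodule D K → Submodule D K) (T : Subalgebra D K)
    (g : Submodule ↥T K → Submodule ↥T K) : Prop :=
  LinkedF f T g ∧
    ∀ Q : Ideal ↥T, QuasiPrime (starF g) Q →
      Dloc (Q.comap (algebraMap D ↥T)) = TlocQ T Q

/-- `B` is a flat `A`-module (for subalgebras `A ⊆ B` of `K`, with the module structure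
coming from the inclusion). -/
def FlatPair (A B : Subalgebra D K) : Prop :=
  ∃ h : A ≤ B, @Module.Flat ↥A ↥B _ _ ((Subalgebra.inclusion h).toRingHom.toModule)

/-- `B` is a flat `A`-module, for subrings `A ⊆ B` of a commutative ring. -/
def FlatSubring {L : Type*} [CommRing L] (A B : Subring L) : Prop :=
  ∃ h : A ≤ B, @Module.Flat ↥A ↥B _ _ ((Subring.inclusion h).toModule)

end Overring


/-! ### Auxiliary machinery: generic lemmas about `starF` and quasi-ideals -/

section Machinery

set_option linter.unusedSectionVars false

open Submodule

variable {R K : Type*} [CommRing R] [IsDomain R] [Field K] [Algebra R K]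

/-- Bundled axioms for a semistar-like operation. -/
structure SSAx (f : Submodule R K → Submodule R K) : Prop where
  smul : ∀ x : K, x ≠ 0 → ∀ E : Submodule R K, E ≠ ⊥ → f (x • E) = x • f E
  mono : ∀ E F : Submodule R K, E ≠ ⊥ → F ≠ ⊥ → E ≤ F → f E ≤ f F
  le_star : ∀ E : Submodule R K, E ≠ ⊥ → E ≤ f E
  idem : ∀ E : Submodule R K, E ≠ ⊥ → f (f E) = f E

variable {f : Submodule R K → Submodule R K}

lemma mem_ptsmul {x y : K} {S : Submodule R K} :
    y ∈ x • S ↔ ∃ e ∈ S, x * e = y := by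
  rw [← SetLike.mem_coe, Submodule.coe_pointwise_smul, Set.mem_smul_set]
  simp [smul_eq_mul]

lemma mem_idealSub {I : Ideal R} {y : K} :
    y ∈ (idealSub I : Submodule R K) ↔ ∃ r ∈ I, algebraMap R K r = y := by
  simp [idealSub, Submodule.mem_map]

lemma mem_comap_alg {M : Submodule R K} {r : R} :
    r ∈ Submodule.comap (Algebra.linearMap R K) M ↔ algebraMap R K r ∈ M := Iff.rfl

lemma idealSub_mono {I J : Ideal R} (h : I ≤ J) :
    (idealSub I : Submodule R K) ≤ idealSub J := Submodule.map_mono h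

lemma idealSub_ne_bot (hinj : Function.Injective (algebraMap R K)) {I : Ideal R}
    (hI : I ≠ ⊥) : (idealSub I : Submodule R K) ≠ ⊥ := by
  obtain ⟨r, hr, hr0⟩ := (Submodule.ne_bot_iff _).1 hI
  refine (Submodule.ne_bot_iff _).2 ⟨algebraMap R K r, mem_idealSub.2 ⟨r, hr, rfl⟩, fun h => hr0 ?_⟩
  exact hinj (by simpa using h)

lemma exists_fg_ne_bot {E : Submodule R K} (hE : E ≠ ⊥) :
    ∃ F : Submodule R K, F.FG ∧ F ≠ ⊥ ∧ F ≤ E := by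
  obtain ⟨e, he, he0⟩ := (Submodule.ne_bot_iff _).1 hE
  exact ⟨Submodule.span R {e}, Submodule.fg_span_singleton e,
    by simpa [Submodule.span_singleton_eq_bot] using he0,
    Submodule.span_le.2 (by simpa using he)⟩

lemma starF_set_directed (hf : SSAx f) (E : Submodule R K) :
    DirectedOn (· ≤ ·) {G | ∃ F : Submodule R K, F.FG ∧ F ≠ ⊥ ∧ F ≤ E ∧ G = f F} := by
  rintro _ ⟨F₁, h₁g, h₁b, h₁l, rfl⟩ _ ⟨F₂, h₂g, h₂b, h₂l, rfl⟩
  have hb : F₁ ⊔ F₂ ≠ ⊥ := by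
    simp only [ne_eq, sup_eq_bot_iff]; tauto
  exact ⟨f (F₁ ⊔ F₂), ⟨F₁ ⊔ F₂, h₁g.sup h₂g, hb, sup_le h₁l h₂l, rfl⟩,
    hf.mono _ _ h₁b hb le_sup_left, hf.mono _ _ h₂b hb le_sup_right⟩

lemma f_le_starF {E F : Submodule R K} (hFG : F.FG) (hFb : F ≠ ⊥) (hFE : F ≤ E) :
    f F ≤ starF f E := le_sSup ⟨F, hFG, hFb, hFE, rfl⟩

lemma starF_le {E M : Submodule R K}
    (h : ∀ F : Submodule R K, F.FG → F ≠ ⊥ → F ≤ E → f F ≤ M) : starF f E ≤ M :=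
  sSup_le (by rintro _ ⟨F, h1, h2, h3, rfl⟩; exact h F h1 h2 h3)

lemma starF_mono {E E' : Submodule R K} (h : E ≤ E') : starF f E ≤ starF f E' :=
  starF_le fun F h1 h2 h3 => f_le_starF h1 h2 (h3.trans h)

lemma mem_starF (hf : SSAx f) {E : Submodule R K} (hE : E ≠ ⊥) {x : K} :
    x ∈ starF f E ↔ ∃ F : Submodule R K, F.FG ∧ F ≠ ⊥ ∧ F ≤ E ∧ x ∈ f F := by
  obtain ⟨F₀, h₀g, h₀b, h₀l⟩ := exists_fg_ne_bot hE
  rw [starF, Submodule.mem_sSup_of_directed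
    (s := {G | ∃ F : Submodule R K, F.FG ∧ F ≠ ⊥ ∧ F ≤ E ∧ G = f F})
    ⟨f F₀, ⟨F₀, h₀g, h₀b, h₀l, rfl⟩⟩ (starF_set_directed hf E)]
  constructor
  · rintro ⟨_, ⟨F, h1, h2, h3, rfl⟩, hx⟩; exact ⟨F, h1, h2, h3, hx⟩
  · rintro ⟨F, h1, h2, h3, hx⟩; exact ⟨f F, ⟨F, h1, h2, h3, rfl⟩, hx⟩

lemma le_starF_self (hf : SSAx f) {E : Submodule R K} (hE : E ≠ ⊥) : E ≤ starF f E := by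
  intro e he
  by_cases h0 : e = 0
  · simpa [h0] using (starF f E).zero_mem
  · have hsb : Submodule.span R {e} ≠ ⊥ := by
      simpa [Submodule.span_singleton_eq_bot] using h0
    refine f_le_starF (Submodule.fg_span_singleton e) hsb
      (Submodule.span_le.2 (by simpa using he)) ?_
    exact hf.le_star _ hsb (Submodule.mem_span_singleton_self e)

lemma starF_ne_bot (hf : SSAx f) {E : Submodule R K} (hE : E ≠ ⊥) : starF f E ≠ ⊥ :=
  fun h => hE (le_bot_iff.1 (h ▸ le_starF_self hf hE))

lemma fg_le_starF (hf : SSAx f) {E F : Submodule R K} (hE : E ≠ ⊥) (hFG : F.FG)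
    (hle : F ≤ starF f E) :
    ∃ G : Submodule R K, G.FG ∧ G ≠ ⊥ ∧ G ≤ E ∧ F ≤ f G := by
  obtain ⟨F₀, h₀g, h₀b, h₀l⟩ := exists_fg_ne_bot hE
  have hc := ((CompleteLattice.isCompactElement_iff_le_of_directed_sSup_le _ F).1
    ((Submodule.fg_iff_compact F).1 hFG))
    {G | ∃ F : Submodule R K, F.FG ∧ F ≠ ⊥ ∧ F ≤ E ∧ G = f F}
    ⟨f F₀, ⟨F₀, h₀g, h₀b, h₀l, rfl⟩⟩ (starF_set_directed hf E) hle
  obtain ⟨_, ⟨G, h1, h2, h3, rfl⟩, hFG'⟩ := hc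
  exact ⟨G, h1, h2, h3, hFG'⟩

lemma starF_idem (hf : SSAx f) {E : Submodule R K} (hE : E ≠ ⊥) :
    starF f (starF f E) = starF f E := by
  refine le_antisymm (starF_le fun F h1 h2 h3 => ?_)
    (starF_mono (le_starF_self hf hE))
  obtain ⟨G, hg1, hg2, hg3, hg4⟩ := fg_le_starF hf hE h1 h3
  have hfGb : f G ≠ ⊥ := fun h => hg2 (le_bot_iff.1 (h ▸ hf.le_star G hg2))
  calc f F ≤ f (f G) := hf.mono _ _ h2 hfGb hg4
    _ = f G := hf.idem G hg2
    _ ≤ starF f E := f_le_starF hg1 hg2 hg3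

/-- The closure `J₀ = I^{⋆_f} ∩ R` of a nonzero ideal is a quasi-`⋆_f`-ideal containing
`I`, with the same `⋆_f`-closure. -/
lemma quasi_closure (hf : SSAx f) (hinj : Function.Injective (algebraMap R K))
    {I : Ideal R} (hI : I ≠ ⊥) :
    QuasiIdeal (starF f) (Submodule.comap (Algebra.linearMap R K) (starF f (idealSub I))) ∧
    I ≤ Submodule.comap (Algebra.linearMap R K) (starF f (idealSub I)) ∧
    (starF f (idealSub (Submodule.comap (Algebra.linearMap R K) (starF f (idealSub I))))
      : Submodule R K) = starF f (idealSub I) := by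
  set J := Submodule.comap (Algebra.linearMap R K) (starF f (idealSub I)) with hJ
  have hIb : (idealSub I : Submodule R K) ≠ ⊥ := idealSub_ne_bot hinj hI
  have hIJ : I ≤ J := by
    intro r hr
    exact le_starF_self hf hIb (mem_idealSub.2 ⟨r, hr, rfl⟩)
  have hJb : J ≠ ⊥ := fun h => hI (le_bot_iff.1 (h ▸ hIJ))
  have key : (starF f (idealSub J) : Submodule R K) = starF f (idealSub I) := by
    refine le_antisymm ?_ (starF_mono (idealSub_mono hIJ))
    have h1 : (idealSub J : Submodule R K) ≤ starF f (idealSub I) :=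
      Submodule.map_comap_le _ _
    exact (starF_mono h1).trans (le_of_eq (starF_idem hf hIb))
  exact ⟨⟨hJb, by rw [key]⟩, hIJ, key⟩

/-- Zorn: a nonzero ideal whose `⋆_f`-closure does not contain `1` is contained in a
quasi-`⋆_f`-maximal ideal. -/
lemma exists_quasiMax (hf : SSAx f) (hinj : Function.Injective (algebraMap R K))
    {I : Ideal R} (hI : I ≠ ⊥) (h1 : (1 : K) ∉ starF f (idealSub I)) :
    ∃ M : Ideal R, QuasiMax (starF f) M ∧ I ≤ M := by
  set S : Set (Ideal R) := {J | QuasiIdeal (starF f) J ∧ J ≠ ⊤ ∧ I ≤ J} with hS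
  obtain ⟨hq0, hle0, -⟩ := quasi_closure hf hinj hI
  have hJ₀S : Submodule.comap (Algebra.linearMap R K) (starF f (idealSub I)) ∈ S := by
    refine ⟨hq0, fun h => h1 ?_, hle0⟩
    have := (Ideal.eq_top_iff_one _).1 h
    simpa using this
  have hzorn : ∀ c ⊆ S, IsChain (· ≤ ·) c → ∀ y ∈ c, ∃ ub ∈ S, ∀ z ∈ c, z ≤ ub := by
    intro c hcS hchain y hy
    refine ⟨sSup c, ?_, fun z hz => le_sSup hz⟩
    have hIle : I ≤ sSup c := ((hcS hy).2.2).trans (le_sSup hy)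
    have hcb : sSup c ≠ ⊥ := fun h => hI (le_bot_iff.1 (h ▸ hIle))
    have hcbK : (idealSub (sSup c) : Submodule R K) ≠ ⊥ := idealSub_ne_bot hinj hcb
    have hdir : DirectedOn (· ≤ ·) ((fun J : Ideal R => (idealSub J : Submodule R K)) '' c) := by
      rintro _ ⟨J1, hJ1, rfl⟩ _ ⟨J2, hJ2, rfl⟩
      rcases hchain.total hJ1 hJ2 with h | h
      · exact ⟨idealSub J2, ⟨J2, hJ2, rfl⟩, idealSub_mono h, le_rfl⟩
      · exact ⟨idealSub J1, ⟨J1, hJ1, rfl⟩, le_rfl, idealSub_mono h⟩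
    have himg : (idealSub (sSup c) : Submodule R K) =
        sSup ((fun J : Ideal R => (idealSub J : Submodule R K)) '' c) := by
      rw [sSup_image]
      exact (Submodule.gc_map_comap (Algebra.linearMap R K)).l_sSup
    have hquasi : QuasiIdeal (starF f) (sSup c) := by
      refine ⟨hcb, le_antisymm ?_
        (fun z hz => le_starF_self hf hcbK (mem_idealSub.2 ⟨z, hz, rfl⟩))⟩
      intro z hz
      rw [mem_comap_alg] at hz
      obtain ⟨F, h1', h2', h3', hzF⟩ := (mem_starF hf hcbK).1 hz
      have h3'' : F ≤ sSup ((fun J : Ideal R => (idealSub J : Submodule R K)) '' c) :=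
        himg ▸ h3'
      obtain ⟨A, hA, hFA⟩ :=
        ((CompleteLattice.isCompactElement_iff_le_of_directed_sSup_le _ F).1
          ((Submodule.fg_iff_compact F).1 h1'))
          ((fun J : Ideal R => (idealSub J : Submodule R K)) '' c)
          ⟨idealSub y, ⟨y, hy, rfl⟩⟩ hdir h3''
      obtain ⟨J, hJc, rfl⟩ := hA
      have hzJ : algebraMap R K z ∈ starF f (idealSub J : Submodule R K) :=
        f_le_starF h1' h2' hFA hzF
      have : z ∈ J := by rw [← (hcS hJc).1.2]; exact hzJ
      exact (le_sSup hJc) this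
    have hne : sSup c ≠ ⊤ := by
      intro h
      have h1' : (1 : R) ∈ sSup c := h ▸ Submodule.mem_top
      rw [Submodule.mem_sSup_of_directed ⟨y, hy⟩ hchain.directedOn] at h1'
      obtain ⟨J, hJc, hJ1⟩ := h1'
      exact (hcS hJc).2.1 ((Ideal.eq_top_iff_one J).2 hJ1)
    exact ⟨hquasi, hne, hIle⟩
  obtain ⟨m, hJ₀m, hm⟩ := zorn_le_nonempty₀ S hzorn _ hJ₀S
  have hmS : m ∈ S := hm.prop
  refine ⟨m, ⟨hmS.1, hmS.2.1, fun J hq hne hmJ => le_antisymm hmJ ?_⟩, hle0.trans hJ₀m⟩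
  exact hm.2 ⟨hq, hne, hmS.2.2.trans hmJ⟩ hmJ

lemma mul_ne_bot' {F G : Submodule R K} (hF : F ≠ ⊥) (hG : G ≠ ⊥) : F * G ≠ ⊥ := by
  obtain ⟨u, hu, hu0⟩ := (Submodule.ne_bot_iff _).1 hF
  obtain ⟨v, hv, hv0⟩ := (Submodule.ne_bot_iff _).1 hG
  exact (Submodule.ne_bot_iff _).2 ⟨u * v, Submodule.mul_mem_mul hu hv, mul_ne_zero hu0 hv0⟩

lemma smul_ne_bot' {x : K} (hx : x ≠ 0) {F : Submodule R K} (hF : F ≠ ⊥) : x • F ≠ ⊥ := by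
  obtain ⟨u, hu, hu0⟩ := (Submodule.ne_bot_iff _).1 hF
  exact (Submodule.ne_bot_iff _).2 ⟨x * u, mem_ptsmul.2 ⟨u, hu, rfl⟩, mul_ne_zero hx hu0⟩

lemma f_mul_aux (hf : SSAx f) {F G : Submodule R K} (hF : F ≠ ⊥) (hG : G ≠ ⊥) :
    f F * G ≤ f (F * G) := by
  rw [Submodule.mul_le]
  intro u hu g hg
  by_cases hg0 : g = 0
  · simpa [hg0] using (f (F * G)).zero_mem
  · have h1 : g • F ≤ F * G := by
      intro y hy
      obtain ⟨e, he, rfl⟩ := mem_ptsmul.1 hy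
      simpa [mul_comm] using Submodule.mul_mem_mul he hg
    have h2 : u * g ∈ f (g • F) := by
      rw [hf.smul g hg0 F hF]
      have := Submodule.smul_mem_pointwise_smul u g (f F) hu
      simpa [smul_eq_mul, mul_comm] using this
    exact hf.mono _ _ (smul_ne_bot' hg0 hF) (mul_ne_bot' hF hG) h1 h2

lemma f_mul (hf : SSAx f) {F G : Submodule R K} (hF : F ≠ ⊥) (hG : G ≠ ⊥) :
    f F * f G ≤ f (F * G) := by
  have hfG : f G ≠ ⊥ := fun h => hG (le_bot_iff.1 (h ▸ hf.le_star G hG))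
  have hFGb : F * G ≠ ⊥ := mul_ne_bot' hF hG
  have step1 : f F * f G ≤ f (F * f G) := f_mul_aux hf hF hfG
  have step2 : F * f G ≤ f (F * G) := by
    rw [mul_comm F (f G), mul_comm F G]
    exact f_mul_aux hf hG hF
  calc f F * f G ≤ f (F * f G) := step1
    _ ≤ f (f (F * G)) := hf.mono _ _ (mul_ne_bot' hF hfG) (fun h => hFGb
        (le_bot_iff.1 (h ▸ hf.le_star _ hFGb))) step2
    _ = f (F * G) := hf.idem _ hFGb

lemma quasiMax_isPrime (hf : SSAx f) (hinj : Function.Injective (algebraMap R K))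
    {M : Ideal R} (hM : QuasiMax (starF f) M) : M.IsPrime := by
  obtain ⟨⟨hMb, hMq⟩, hMt, hmax⟩ := hM
  refine ⟨hMt, ?_⟩
  intro a b hab
  by_contra hcon
  push_neg at hcon
  obtain ⟨ha, hb⟩ := hcon
  have key : ∀ x : R, x ∉ M →
      (1 : K) ∈ starF f (idealSub (M ⊔ Ideal.span {x}) : Submodule R K) := by
    intro x hx
    have hxb : M ⊔ Ideal.span {x} ≠ ⊥ :=
      fun h => hMb (le_bot_iff.1 (h ▸ (le_sup_left : M ≤ M ⊔ Ideal.span {x})))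
    obtain ⟨hq, hle, -⟩ := quasi_closure hf hinj hxb
    by_cases hJt : Submodule.comap (Algebra.linearMap R K)
        (starF f (idealSub (M ⊔ Ideal.span {x}))) = ⊤
    · have := (Ideal.eq_top_iff_one _).1 hJt
      simpa using this
    · exfalso
      have hMJx : M ≤ Submodule.comap (Algebra.linearMap R K)
          (starF f (idealSub (M ⊔ Ideal.span {x}))) := le_sup_left.trans hle
      have heq := hmax _ hq hJt hMJx
      have hxJ : x ∈ Submodule.comap (Algebra.linearMap R K)
          (starF f (idealSub (M ⊔ Ideal.span {x}))) :=
        hle (Ideal.mem_sup_right (Ideal.mem_span_singleton_self x))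
      rw [← heq] at hxJ
      exact hx hxJ
  have hab' : (idealSub (M ⊔ Ideal.span {a}) : Submodule R K) ≠ ⊥ :=
    idealSub_ne_bot hinj (fun h => hMb (le_bot_iff.1 (h ▸ (le_sup_left : M ≤ _))))
  have hbb' : (idealSub (M ⊔ Ideal.span {b}) : Submodule R K) ≠ ⊥ :=
    idealSub_ne_bot hinj (fun h => hMb (le_bot_iff.1 (h ▸ (le_sup_left : M ≤ _))))
  obtain ⟨F, hF1, hF2, hF3, hF4⟩ := (mem_starF hf hab').1 (key a ha)
  obtain ⟨G, hG1, hG2, hG3, hG4⟩ := (mem_starF hf hbb').1 (key b hb)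
  have hFG_le : F * G ≤ (idealSub M : Submodule R K) := by
    rw [Submodule.mul_le]
    intro u hu v hv
    obtain ⟨r, hr, rfl⟩ := mem_idealSub.1 (hF3 hu)
    obtain ⟨r', hr', rfl⟩ := mem_idealSub.1 (hG3 hv)
    rw [← map_mul]
    refine mem_idealSub.2 ⟨r * r', ?_, rfl⟩
    obtain ⟨m, hm, c, hc, rfl⟩ := Submodule.mem_sup.1 hr
    obtain ⟨m', hm', c', hc', rfl⟩ := Submodule.mem_sup.1 hr'
    obtain ⟨d, rfl⟩ := Ideal.mem_span_singleton'.1 hc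
    obtain ⟨d', rfl⟩ := Ideal.mem_span_singleton'.1 hc'
    have hexp : (m + d * a) * (m' + d' * b) =
        (m * (m' + d' * b) + (d * a) * m') + (d * d') * (a * b) := by ring
    rw [hexp]
    exact M.add_mem (M.add_mem (M.mul_mem_right _ hm) (M.mul_mem_left _ hm'))
      (M.mul_mem_left _ hab)
  have hone : (1 : K) ∈ f (F * G) := by
    have := f_mul hf hF2 hG2 (Submodule.mul_mem_mul hF4 hG4)
    simpa using this
  have hMI : (1 : K) ∈ starF f (idealSub M : Submodule R K) :=
    f_le_starF (hF1.mul hG1) (mul_ne_bot' hF2 hG2) hFG_le hone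
  have h1M : (1 : R) ∈ M := by
    rw [← hMq]
    simpa using hMI
  exact hMt ((Ideal.eq_top_iff_one M).2 h1M)

lemma exists_quasiPrime (hf : SSAx f) (hinj : Function.Injective (algebraMap R K))
    {I : Ideal R} (hI : I ≠ ⊥) (h1 : (1 : K) ∉ starF f (idealSub I)) :
    ∃ M : Ideal R, QuasiPrime (starF f) M ∧ I ≤ M := by
  obtain ⟨M, hM, hIM⟩ := exists_quasiMax hf hinj hI h1
  exact ⟨M, ⟨hM.1, quasiMax_isPrime hf hinj hM⟩, hIM⟩

lemma mem_locSub {Q : Ideal R} (hQ : Q.IsPrime) {E : Submodule R K} {y : K} :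
    y ∈ locSub Q E ↔ ∃ s : R, s ∉ Q ∧ algebraMap R K s * y ∈ E := by
  have h1Q : (1 : R) ∉ Q := (Ideal.ne_top_iff_one Q).1 hQ.ne_top
  let N : Submodule R K :=
    { carrier := {x : K | ∃ s : R, s ∉ Q ∧ algebraMap R K s * x ∈ E}
      add_mem' := by
        rintro x y ⟨r, hr, hrx⟩ ⟨r', hr', hry⟩
        refine ⟨r * r', fun h => ((hQ.mem_or_mem h).elim hr hr'), ?_⟩
        rw [map_mul, mul_add]
        have e1 : algebraMap R K r * algebraMap R K r' * x
            = r' • (algebraMap R K r * x) := by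
          rw [Algebra.smul_def]; ring
        have e2 : algebraMap R K r * algebraMap R K r' * y
            = r • (algebraMap R K r' * y) := by
          rw [Algebra.smul_def]; ring
        rw [e1, e2]
        exact E.add_mem (E.smul_mem _ hrx) (E.smul_mem _ hry)
      zero_mem' := ⟨1, h1Q, by simpa using E.zero_mem⟩
      smul_mem' := by
        rintro t x ⟨r, hr, hrx⟩
        refine ⟨r, hr, ?_⟩
        have e1 : algebraMap R K r * (t • x) = t • (algebraMap R K r * x) := by
          rw [Algebra.smul_def, Algebra.smul_def]; ring
        rw [e1]
        exact E.smul_mem _ hrx }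
  have hN : locSub Q E = N := le_antisymm (Submodule.span_le.2 (fun x hx => hx))
    Submodule.subset_span
  rw [hN]
  exact Iff.rfl

end Machinery


/-! ### Lemmas about the operation `ℓ = ℓ_{⋆,T}` -/

section EllLemmas

set_option linter.unusedSectionVars false

open Submodule

variable {D K : Type*} [CommRing D] [IsDomain D] [Field K] [Algebra D K] [IsFractionRing D K]
variable (s : SemistarOp D K) (T : Subalgebra D K)

lemma sAx : SSAx s.toFun := ⟨s.smul', s.mono', s.le_star', s.idem'⟩

lemma T_inj : Function.Injective (algebraMap ↥T K) := fun a b h => Subtype.ext h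

lemma D_mul_mem {E : Submodule ↥T K} {w : K} (hw : w ∈ E) (r : D) :
    algebraMap D K r * w ∈ E := by
  rw [← Algebra.smul_def, ← algebraMap_smul (↥T) r w]
  exact E.smul_mem _ hw

lemma mem_loc {P : Ideal D} (hP : P.IsPrime) {E : Submodule ↥T K} {y : K} :
    y ∈ Submodule.span ↥T {x : K | ∃ r : D, r ∉ P ∧ algebraMap D K r * x ∈ E} ↔
      ∃ r : D, r ∉ P ∧ algebraMap D K r * y ∈ E := by
  have h1P : (1 : D) ∉ P := (Ideal.ne_top_iff_one P).1 hP.ne_top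
  let N : Submodule ↥T K :=
    { carrier := {x : K | ∃ r : D, r ∉ P ∧ algebraMap D K r * x ∈ E}
      add_mem' := by
        rintro x y ⟨r, hr, hrx⟩ ⟨r', hr', hry⟩
        refine ⟨r * r', fun h => ((hP.mem_or_mem h).elim hr hr'), ?_⟩
        rw [map_mul, mul_add]
        have e1 : algebraMap D K r * algebraMap D K r' * x
            = algebraMap D K r' * (algebraMap D K r * x) := by ring
        have e2 : algebraMap D K r * algebraMap D K r' * y
            = algebraMap D K r * (algebraMap D K r' * y) := by ring
        rw [e1, e2]
        exact E.add_mem (D_mul_mem T hrx r') (D_mul_mem T hry r)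
      zero_mem' := ⟨1, h1P, by simpa using E.zero_mem⟩
      smul_mem' := by
        rintro t x ⟨r, hr, hrx⟩
        refine ⟨r, hr, ?_⟩
        have e3 : algebraMap D K r * (t • x) = t • (algebraMap D K r * x) := by
          show algebraMap D K r * ((t : K) * x) = (t : K) * (algebraMap D K r * x)
          ring
        rw [e3]
        exact E.smul_mem t hrx }
  have hN : Submodule.span ↥T {x : K | ∃ r : D, r ∉ P ∧ algebraMap D K r * x ∈ E} = N :=
    le_antisymm (Submodule.span_le.2 fun x hx => hx) Submodule.subset_span
  rw [hN]
  exact Iff.rfl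

lemma mem_ell {E : Submodule ↥T K} {y : K} :
    y ∈ ellOp s.toFun T E ↔
      ∀ P : Ideal D, QuasiPrime (starF s.toFun) P →
        ∃ r : D, r ∉ P ∧ algebraMap D K r * y ∈ E := by
  rw [ellOp, Submodule.mem_iInf]
  refine forall_congr' fun P => ?_
  rw [Submodule.mem_iInf]
  exact forall_congr' fun hP => mem_loc T hP.2

lemma ell_mono {E E' : Submodule ↥T K} (h : E ≤ E') :
    ellOp s.toFun T E ≤ ellOp s.toFun T E' := by
  intro y hy
  rw [mem_ell] at hy ⊢
  intro P hP
  obtain ⟨r, hr, hry⟩ := hy P hP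
  exact ⟨r, hr, h hry⟩

lemma le_ell (E : Submodule ↥T K) : E ≤ ellOp s.toFun T E := by
  intro y hy
  rw [mem_ell]
  intro P hP
  exact ⟨1, (Ideal.ne_top_iff_one P).1 hP.2.ne_top, by simpa using hy⟩

lemma ell_idem (E : Submodule ↥T K) :
    ellOp s.toFun T (ellOp s.toFun T E) = ellOp s.toFun T E := by
  refine le_antisymm ?_ (le_ell s T _)
  intro y hy
  rw [mem_ell] at hy ⊢
  intro P hP
  obtain ⟨r, hr, hry⟩ := hy P hP
  obtain ⟨r', hr', hr'ry⟩ := (mem_ell s T).1 hry P hP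
  refine ⟨r' * r, fun h => ((hP.2.mem_or_mem h).elim hr' hr), ?_⟩
  rw [map_mul, mul_assoc]
  exact hr'ry

lemma ell_smul {x : K} (hx : x ≠ 0) (E : Submodule ↥T K) :
    ellOp s.toFun T (x • E) = x • ellOp s.toFun T E := by
  ext y
  rw [mem_ptsmul, mem_ell]
  constructor
  · intro h
    refine ⟨x⁻¹ * y, ?_, by field_simp⟩
    rw [mem_ell]
    intro P hP
    obtain ⟨r, hr, hry⟩ := h P hP
    obtain ⟨e, he, hxe⟩ := mem_ptsmul.1 hry
    refine ⟨r, hr, ?_⟩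
    have hkey : algebraMap D K r * (x⁻¹ * y) = e := by
      have hx' : x⁻¹ * (x * e) = e := by field_simp
      rw [hxe] at hx'
      rw [← hx']
      ring
    rw [hkey]
    exact he
  · rintro ⟨e, he, rfl⟩
    intro P hP
    obtain ⟨r, hr, hre⟩ := (mem_ell s T).1 he P hP
    exact ⟨r, hr, mem_ptsmul.2 ⟨algebraMap D K r * e, hre, by ring⟩⟩

lemma ell_inf (E E' : Submodule ↥T K) :
    ellOp s.toFun T (E ⊓ E') = ellOp s.toFun T E ⊓ ellOp s.toFun T E' := by
  refine le_antisymm (le_inf (ell_mono s T inf_le_left) (ell_mono s T inf_le_right)) ?_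
  intro y hy
  obtain ⟨h1, h2⟩ := Submodule.mem_inf.1 hy
  rw [mem_ell]
  intro P hP
  obtain ⟨r, hr, hr1⟩ := (mem_ell s T).1 h1 P hP
  obtain ⟨r', hr', hr2⟩ := (mem_ell s T).1 h2 P hP
  refine ⟨r * r', fun h => ((hP.2.mem_or_mem h).elim hr hr'), Submodule.mem_inf.2 ⟨?_, ?_⟩⟩
  · rw [map_mul, mul_comm (algebraMap D K r) (algebraMap D K r'), mul_assoc]
    exact D_mul_mem T hr1 r'
  · rw [map_mul, mul_assoc]
    exact D_mul_mem T hr2 r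

lemma ellAx : SSAx (ellOp s.toFun T) :=
  ⟨fun x hx E _ => ell_smul s T hx E,
   fun _ _ _ _ h => ell_mono s T h,
   fun E _ => le_ell s T E,
   fun E _ => ell_idem s T E⟩

/-- Part (1): `ℓ` is of finite type. -/
lemma ell_eq_starF {E : Submodule ↥T K} (hE : E ≠ ⊥) :
    ellOp s.toFun T E = starF (ellOp s.toFun T) E := by
  classical
  by_cases hex : ∃ P : Ideal D, QuasiPrime (starF s.toFun) P
  · obtain ⟨P₀, hP₀⟩ := hex
    refine le_antisymm ?_ (starF_le fun F _ _ hFE => ell_mono s T hFE)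
    intro x hx
    by_cases hx0 : x = 0
    · simpa [hx0] using (starF (ellOp s.toFun T) E).zero_mem
    set I : Ideal D :=
      Submodule.comap (LinearMap.toSpanSingleton D K x) (E.restrictScalars D) with hI
    have hmemI : ∀ r : D, r ∈ I ↔ algebraMap D K r * x ∈ E := by
      intro r
      simp only [hI, Submodule.mem_comap, LinearMap.toSpanSingleton_apply, Algebra.smul_def,
        Submodule.restrictScalars_mem]
    have hxall := (mem_ell s T).1 hx
    have hIbot : I ≠ ⊥ := by
      obtain ⟨r, hr, hrx⟩ := hxall P₀ hP₀
      intro h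
      have hrI : r ∈ I := (hmemI r).2 hrx
      rw [h] at hrI
      have hr0 : r = 0 := by simpa using hrI
      exact hr (hr0 ▸ P₀.zero_mem)
    by_cases h1 : (1 : K) ∈ starF s.toFun (idealSub I)
    · obtain ⟨F, hF1, hF2, hF3, hF4⟩ :=
        (mem_starF (sAx s) (idealSub_ne_bot (IsFractionRing.injective D K) hIbot)).1 h1
      have hF1' : F.FG := hF1
      obtain ⟨u, hu⟩ := hF1'
      set g : K → D := fun y => if h : ∃ r ∈ I, algebraMap D K r = y then h.choose else 0
        with hg
      have husub : (u : Set K) ⊆ F := hu ▸ Submodule.subset_span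
      have hgspec : ∀ y ∈ u, g y ∈ I ∧ algebraMap D K (g y) = y := by
        intro y hy
        have hey : ∃ r ∈ I, algebraMap D K r = y := mem_idealSub.1 (hF3 (husub hy))
        simp only [hg, dif_pos hey]
        exact ⟨hey.choose_spec.1, hey.choose_spec.2⟩
      set J : Ideal D := Ideal.span ((u.image g : Finset D) : Set D) with hJdef
      have hJI : J ≤ I := by
        refine Ideal.span_le.2 ?_
        intro r hr
        simp only [Finset.coe_image, Set.mem_image, Finset.mem_coe] at hr
        obtain ⟨y, hy, rfl⟩ := hr
        exact (hgspec y hy).1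
      have hFJ : F ≤ (idealSub J : Submodule D K) := by
        rw [← hu]
        refine Submodule.span_le.2 fun y hy => ?_
        refine mem_idealSub.2 ⟨g y, ?_, (hgspec y (Finset.mem_coe.1 hy)).2⟩
        exact Ideal.subset_span (by
          simp only [Finset.coe_image, Set.mem_image, Finset.mem_coe]
          exact ⟨y, Finset.mem_coe.1 hy, rfl⟩)
      have hJP : ∀ P : Ideal D, QuasiPrime (starF s.toFun) P → ¬J ≤ P := by
        intro P hP hJle
        have h1P : (1 : K) ∈ starF s.toFun (idealSub P) :=
          f_le_starF hF1 hF2 (hFJ.trans (idealSub_mono hJle)) hF4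
        have h1P' : (1 : D) ∈ P := by
          rw [← hP.1.2]
          simpa using h1P
        exact (Ideal.ne_top_iff_one P).1 hP.2.ne_top h1P'
      set F' : Submodule ↥T K := Submodule.span ↥T
        ((fun r : D => algebraMap D K r * x) '' ((u.image g : Finset D) : Set D)) with hF'
      have hF'fg : F'.FG :=
        Submodule.fg_span (Set.Finite.image _ (Finset.finite_toSet _))
      have hF'le : F' ≤ E := by
        refine Submodule.span_le.2 ?_
        rintro _ ⟨r, hr, rfl⟩
        exact (hmemI r).1 (hJI (Ideal.subset_span hr))
      have hF'b : F' ≠ ⊥ := by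
        have hyu : ∃ y ∈ u, y ≠ 0 := by
          by_contra hall
          push_neg at hall
          apply hF2
          rw [← hu, Submodule.span_eq_bot]
          exact fun y hy => hall y (Finset.mem_coe.1 hy)
        obtain ⟨y, hy, hy0⟩ := hyu
        have hgy := hgspec y hy
        have hgy0 : g y ≠ 0 := fun h => hy0 (by rw [← hgy.2, h, map_zero])
        refine (Submodule.ne_bot_iff _).2 ⟨algebraMap D K (g y) * x, ?_, ?_⟩
        · refine Submodule.subset_span ⟨g y, ?_, rfl⟩
          simp only [Finset.coe_image, Set.mem_image, Finset.mem_coe]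
          exact ⟨y, hy, rfl⟩
        · refine mul_ne_zero (fun h => hgy0 ((IsFractionRing.injective D K) ?_)) hx0
          simpa using h
      have hxF' : x ∈ ellOp s.toFun T F' := by
        rw [mem_ell]
        intro P hP
        obtain ⟨r, hrJ, hrP⟩ := SetLike.not_le_iff_exists.1 (hJP P hP)
        refine ⟨r, hrP, ?_⟩
        have hmap : J ≤ Submodule.comap (LinearMap.toSpanSingleton D K x)
            (F'.restrictScalars D) := by
          rw [hJdef]
          refine Ideal.span_le.2 fun r₀ hr₀ => ?_
          rw [SetLike.mem_coe, Submodule.mem_comap, LinearMap.toSpanSingleton_apply,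
            Algebra.smul_def]
          exact Submodule.subset_span ⟨r₀, hr₀, rfl⟩
        have hmem := hmap hrJ
        rw [Submodule.mem_comap, LinearMap.toSpanSingleton_apply, Algebra.smul_def] at hmem
        exact hmem
      exact f_le_starF (f := ellOp s.toFun T) hF'fg hF'b hF'le hxF'
    · obtain ⟨M, hM, hIM⟩ :=
        exists_quasiPrime (sAx s) (IsFractionRing.injective D K) hIbot h1
      obtain ⟨r, hrM, hrx⟩ := hxall M hM
      exact (hrM (hIM ((hmemI r).2 hrx))).elim
  · have htop : ∀ E' : Submodule ↥T K, ellOp s.toFun T E' = ⊤ := by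
      intro E'
      refine eq_top_iff.2 fun y _ => ?_
      rw [mem_ell]
      exact fun P hP => absurd ⟨P, hP⟩ hex
    obtain ⟨F₀, h1, h2, h3⟩ := exists_fg_ne_bot hE
    rw [htop E]
    refine (eq_top_iff.2 ?_).symm
    rw [← htop F₀]
    exact f_le_starF h1 h2 h3

/-- Each quasi-`ℓ`-ideal localization dominates `ℓ` (stability). -/
lemma ell_le_locSub {E : Submodule ↥T K} {Q : Ideal ↥T}
    (hQ : QuasiIdeal (starF (ellOp s.toFun T)) Q) (hQt : Q ≠ ⊤) :
    ellOp s.toFun T E ≤ locSub Q E := by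
  intro x hx
  by_cases hx0 : x = 0
  · simpa [hx0] using (locSub Q E).zero_mem
  set J : Ideal ↥T := Submodule.comap (LinearMap.toSpanSingleton ↥T K x) E with hJ
  have hmemJ : ∀ t : ↥T, t ∈ J ↔ algebraMap ↥T K t * x ∈ E := by
    intro t
    rw [hJ, Submodule.mem_comap, LinearMap.toSpanSingleton_apply, Algebra.smul_def]
  have hone : (1 : K) ∈ ellOp s.toFun T (idealSub J) := by
    have hxmem : x ∈ ellOp s.toFun T E ⊓ ellOp s.toFun T (x • (1 : Submodule ↥T K)) := by
      refine Submodule.mem_inf.2 ⟨hx, le_ell s T _ ?_⟩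
      exact mem_ptsmul.2 ⟨1, Submodule.mem_one.2 ⟨1, map_one _⟩, mul_one x⟩
    rw [← ell_inf] at hxmem
    have hEq : E ⊓ (x • (1 : Submodule ↥T K)) = x • (idealSub J : Submodule ↥T K) := by
      ext y
      rw [Submodule.mem_inf, mem_ptsmul, mem_ptsmul]
      constructor
      · rintro ⟨hyE, t', ht', rfl⟩
        obtain ⟨t, rfl⟩ := Submodule.mem_one.1 ht'
        refine ⟨algebraMap ↥T K t, mem_idealSub.2 ⟨t, ?_, rfl⟩, rfl⟩
        rw [hmemJ]
        rwa [mul_comm] at hyE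
      · rintro ⟨z, hz, rfl⟩
        obtain ⟨t, ht, rfl⟩ := mem_idealSub.1 hz
        refine ⟨?_, ⟨algebraMap ↥T K t, Submodule.mem_one.2 ⟨t, rfl⟩, rfl⟩⟩
        rw [mul_comm]
        exact (hmemJ t).1 ht
    rw [hEq, ell_smul s T hx0] at hxmem
    obtain ⟨e, he, hxe⟩ := mem_ptsmul.1 hxmem
    have he1 : e = 1 := mul_left_cancel₀ hx0 (hxe.trans (mul_one x).symm)
    rwa [← he1]
  have hJQ : ¬J ≤ Q := by
    intro hle
    have hQb : (idealSub Q : Submodule ↥T K) ≠ ⊥ :=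
      idealSub_ne_bot (T_inj T) hQ.1
    have h1 : (1 : K) ∈ starF (ellOp s.toFun T) (idealSub Q) := by
      rw [← ell_eq_starF s T hQb]
      exact ell_mono s T (idealSub_mono hle) hone
    have h1' : (1 : ↥T) ∈ Q := by
      rw [← hQ.2]
      simpa using h1
    exact (Ideal.ne_top_iff_one Q).1 hQt h1'
  obtain ⟨t, htJ, htQ⟩ := SetLike.not_le_iff_exists.1 hJQ
  exact Submodule.subset_span ⟨t, htQ, (hmemJ t).1 htJ⟩

end EllLemmas

/-- **Proposition 3.10 (4).** `ℓ = ℓ_{⋆,T}` is a semistar operation of finite type on `T`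
(`ℓ = ℓ_f`), and its associated spectral operation coincides with it (`ℓ̃ = ℓ`). -/
theorem ellOp_finite_type_and_spectral
    {D K : Type*} [CommRing D] [IsDomain D] [Field K] [Algebra D K] [IsFractionRing D K]
    (s : SemistarOp D K) (T : Subalgebra D K) :
    (∀ E : Submodule ↥T K, E ≠ ⊥ → ellOp s.toFun T E = starF (ellOp s.toFun T) E) ∧
    (∀ E : Submodule ↥T K, E ≠ ⊥ → tildeOp (ellOp s.toFun T) E = ellOp s.toFun T E) := by
  refine ⟨fun E hE => ell_eq_starF s T hE, fun E hE => ?_⟩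
  rw [tildeOp]
  refine le_antisymm ?_
    (le_iInf fun Q => le_iInf fun hQ => ell_le_locSub s T hQ.1 hQ.2.1)
  intro x hx
  by_contra hxE
  have hx0 : x ≠ 0 := fun h => hxE (by simpa [h] using (ellOp s.toFun T E).zero_mem)
  set L := ellOp s.toFun T E with hL
  set J : Ideal ↥T := Submodule.comap (LinearMap.toSpanSingleton ↥T K x) L with hJ
  have hmemJ : ∀ t : ↥T, t ∈ J ↔ algebraMap ↥T K t * x ∈ L := by
    intro t
    rw [hJ, Submodule.mem_comap, LinearMap.toSpanSingleton_apply, Algebra.smul_def]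
  have hJtop : J ≠ ⊤ := by
    intro h
    have h1 : (1 : ↥T) ∈ J := h ▸ Submodule.mem_top
    rw [hmemJ] at h1
    rw [map_one, one_mul] at h1
    exact hxE h1
  have hJbot : J ≠ ⊥ := by
    obtain ⟨⟨a, b⟩, hab⟩ := IsLocalization.surj (nonZeroDivisors D) x
    obtain ⟨e, heE, he0⟩ := (Submodule.ne_bot_iff E).1 hE
    obtain ⟨⟨c, d⟩, hcd⟩ := IsLocalization.surj (nonZeroDivisors D) e
    have hd0 : algebraMap D K (d : D) ≠ 0 := fun h =>
      nonZeroDivisors.ne_zero d.2 (IsFractionRing.injective D K (by simpa using h))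
    have hc0 : c ≠ 0 := by
      intro h
      rw [h, map_zero] at hcd
      exact he0 ((mul_eq_zero.1 hcd).resolve_right hd0)
    set t : ↥T := algebraMap D ↥T ((b : D) * c) with ht
    have htK : (algebraMap ↥T K t : K) = algebraMap D K ((b : D) * c) := by
      rw [ht]
      exact (IsScalarTower.algebraMap_apply D ↥T K _).symm
    have hcE : algebraMap D K c ∈ E := by
      rw [← hcd, mul_comm]
      exact D_mul_mem T heE (d : D)
    have htx : algebraMap ↥T K t * x ∈ E := by
      have hcalc : algebraMap ↥T K t * x = algebraMap D K a * algebraMap D K c := by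
        rw [htK, map_mul]
        calc algebraMap D K (b : D) * algebraMap D K c * x
            = algebraMap D K c * (x * algebraMap D K (b : D)) := by ring
          _ = algebraMap D K c * algebraMap D K a := by rw [hab]
          _ = algebraMap D K a * algebraMap D K c := by ring
      rw [hcalc]
      exact D_mul_mem T hcE a
    have htJ : t ∈ J := (hmemJ t).2 (le_ell s T E htx)
    have ht0 : t ≠ 0 := by
      intro h
      have h0K : (algebraMap ↥T K t : K) = 0 := by rw [h, map_zero]
      rw [htK] at h0K
      have hbc : (b : D) * c = 0 := IsFractionRing.injective D K (by simpa using h0K)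
      exact mul_ne_zero (nonZeroDivisors.ne_zero b.2) hc0 hbc
    exact fun h => ht0 (by rw [h, Submodule.mem_bot] at htJ; exact htJ)
  have hJquasi : Submodule.comap (Algebra.linearMap ↥T K) (ellOp s.toFun T (idealSub J)) = J := by
    refine le_antisymm ?_ (fun t ht => le_ell s T _ (mem_idealSub.2 ⟨t, ht, rfl⟩))
    intro t ht
    rw [mem_comap_alg] at ht
    have h2 : algebraMap ↥T K t * x ∈ x • ellOp s.toFun T (idealSub J) := by
      have := Submodule.smul_mem_pointwise_smul _ x _ ht
      simpa [smul_eq_mul, mul_comm] using this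
    rw [← ell_smul s T hx0] at h2
    have h3 : x • (idealSub J : Submodule ↥T K) ≤ L := by
      intro y hy
      obtain ⟨z, hz, rfl⟩ := mem_ptsmul.1 hy
      obtain ⟨t', ht', rfl⟩ := mem_idealSub.1 hz
      rw [mul_comm]
      exact (hmemJ t').1 ht'
    have h4 : algebraMap ↥T K t * x ∈ L := by
      have h5 := ell_mono s T h3 h2
      rw [hL, ell_idem] at h5
      exact h5
    exact (hmemJ t).2 h4
  have h1J : (1 : K) ∉ starF (ellOp s.toFun T) (idealSub J) := by
    rw [← ell_eq_starF s T (idealSub_ne_bot (T_inj T) hJbot)]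
    intro h
    have h1' : (1 : ↥T) ∈ J := by
      rw [← hJquasi]
      simpa using h
    exact hJtop ((Ideal.eq_top_iff_one J).2 h1')
  obtain ⟨M, hM, hJM⟩ := exists_quasiMax (ellAx s T) (T_inj T) hJbot h1J
  have hMprime := quasiMax_isPrime (ellAx s T) (T_inj T) hM
  have hxM : x ∈ locSub M E :=
    (Submodule.mem_iInf _).1 ((Submodule.mem_iInf _).1 hx M) hM
  obtain ⟨u, huM, hux⟩ := (mem_locSub hMprime).1 hxM
  have huJ : u ∈ J := (hmemJ u).2 (le_ell s T E hux)
  exact huM (hJM huJ)
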